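/- Let R be a commutative ring, δ : R → R a derivation over ℤ, applied entrywise to matrices over R, and h ≥ 1. Let 𝒯 be the (2h+2)×(2h+2) block matrix over R with block sizes (1, h, h, 1): 𝒯 = [[1, τ01, τ02, τ03], [0, I_h, τ12, τ13], [0, 0, I_h, τ23], [0, 0, 0, 1]], where τ01, τ02 are 1×h, τ03 is 1×1, τ12 is h×h, τ13, τ23 are h×1. Suppose δ(𝒯) = 𝒯·N, where N is the (2h+2)×(2h+2) block matrix whose only nonzero blocks are the superdiagonal blocks η01 (1×h), η12 (h×h), η23 (h×1). Suppose moreover the Riemann relations hold: τ01 = τ23^T, τ12 = τ12^T, and τ02 = τ23^T·τ12 − τ13^T. Then δ(τ13) = τ12·δ(τ23), and, setting Z = τ03 − τ23^T·τ13 (a 1×1 matrix), δ(Z) = −2·τ13^T·δ(τ23). -/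

import Mathlib

/-!
Reading off the last block column of `δ𝒯 = 𝒯N` gives `δτ23 = η23`, `δτ13 = τ12 η23` and
`δτ03 = τ02 η23`. Substituting `τ02 = τ23ᵀτ12 − τ13ᵀ` into
`δZ = δτ03 − (δτ23)ᵀτ13 − τ23ᵀ δτ13`, the terms `τ23ᵀτ12η23` cancel, and the two remaining
terms `τ13ᵀη23` and `η23ᵀτ13` agree because a `1 × 1` matrix is its own transpose.
-/

open Matrix

/-- A `(2h+2)×(2h+2)` matrix built from 16 blocks of sizes `(1, h, h, 1)`. -/
def blk4 {R : Type*} [CommRing R] {h : ℕ}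
    (M00 : Matrix Unit Unit R) (M01 : Matrix Unit (Fin h) R)
    (M02 : Matrix Unit (Fin h) R) (M03 : Matrix Unit Unit R)
    (M10 : Matrix (Fin h) Unit R) (M11 : Matrix (Fin h) (Fin h) R)
    (M12 : Matrix (Fin h) (Fin h) R) (M13 : Matrix (Fin h) Unit R)
    (M20 : Matrix (Fin h) Unit R) (M21 : Matrix (Fin h) (Fin h) R)
    (M22 : Matrix (Fin h) (Fin h) R) (M23 : Matrix (Fin h) Unit R)
    (M30 : Matrix Unit Unit R) (M31 : Matrix Unit (Fin h) R)
    (M32 : Matrix Unit (Fin h) R) (M33 : Matrix Unit Unit R) :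
    Matrix ((Unit ⊕ Fin h) ⊕ (Fin h ⊕ Unit)) ((Unit ⊕ Fin h) ⊕ (Fin h ⊕ Unit)) R :=
  Matrix.fromBlocks
    (Matrix.fromBlocks M00 M01 M10 M11) (Matrix.fromBlocks M02 M03 M12 M13)
    (Matrix.fromBlocks M20 M21 M30 M31) (Matrix.fromBlocks M22 M23 M32 M33)

theorem Matrix.map_mul_of_leibniz {R m n p : Type*} [CommRing R] [Fintype n] (δ : R →+ R)
    (hδ : ∀ a b : R, δ (a * b) = a * δ b + b * δ a) (A : Matrix m n R) (B : Matrix n p R) :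
    (A * B).map δ = A.map δ * B + A * B.map δ := by
  ext i j
  simp only [map_apply, mul_apply, add_apply, map_sum, hδ, ← Finset.sum_add_distrib]
  exact Finset.sum_congr rfl fun k _ => by ring

theorem Matrix.transpose_eq_self_of_subsingleton {α n : Type*} [Subsingleton n]
    (M : Matrix n n α) : Mᵀ = M := by
  ext i j
  rw [Subsingleton.elim i j]
  rfl

section Blocks

variable {R : Type*} [CommRing R] {h : ℕ}

theorem blk4_map {S : Type*} [CommRing S] (f : R → S)
    (M00 : Matrix Unit Unit R) (M01 M02 : Matrix Unit (Fin h) R) (M03 : Matrix Unit Unit R)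
    (M10 : Matrix (Fin h) Unit R) (M11 M12 : Matrix (Fin h) (Fin h) R)
    (M13 M20 : Matrix (Fin h) Unit R) (M21 M22 : Matrix (Fin h) (Fin h) R)
    (M23 : Matrix (Fin h) Unit R) (M30 : Matrix Unit Unit R) (M31 M32 : Matrix Unit (Fin h) R)
    (M33 : Matrix Unit Unit R) :
    (blk4 M00 M01 M02 M03 M10 M11 M12 M13 M20 M21 M22 M23 M30 M31 M32 M33).map f =
      blk4 (M00.map f) (M01.map f) (M02.map f) (M03.map f) (M10.map f) (M11.map f)
        (M12.map f) (M13.map f) (M20.map f) (M21.map f) (M22.map f) (M23.map f)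
        (M30.map f) (M31.map f) (M32.map f) (M33.map f) := by
  simp only [blk4, fromBlocks_map]

theorem blk4_unipotent_mul_superdiag
    (τ01 τ02 : Matrix Unit (Fin h) R) (τ03 : Matrix Unit Unit R)
    (τ12 : Matrix (Fin h) (Fin h) R) (τ13 τ23 : Matrix (Fin h) Unit R)
    (η01 : Matrix Unit (Fin h) R) (η12 : Matrix (Fin h) (Fin h) R)
    (η23 : Matrix (Fin h) Unit R) :
    blk4 1 τ01 τ02 τ03 0 1 τ12 τ13 0 0 1 τ23 0 0 0 1 *
        blk4 0 η01 0 0 0 0 η12 0 0 0 0 η23 0 0 0 0 =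
      blk4 0 η01 (τ01 * η12) (τ02 * η23) 0 0 η12 (τ12 * η23) 0 0 0 η23 0 0 0 0 := by
  simp only [blk4, fromBlocks_multiply, Matrix.mul_zero, Matrix.zero_mul, Matrix.one_mul,
    fromBlocks_add, add_zero, zero_add]

theorem lastColumn_map_of_map_eq_mul_superdiag
    (δ : R → R) (τ01 τ02 : Matrix Unit (Fin h) R) (τ03 : Matrix Unit Unit R)
    (τ12 : Matrix (Fin h) (Fin h) R) (τ13 τ23 : Matrix (Fin h) Unit R)
    (η01 : Matrix Unit (Fin h) R) (η12 : Matrix (Fin h) (Fin h) R)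
    (η23 : Matrix (Fin h) Unit R)
    (hconn : (blk4 1 τ01 τ02 τ03 0 1 τ12 τ13 0 0 1 τ23 0 0 0 1).map δ =
      blk4 1 τ01 τ02 τ03 0 1 τ12 τ13 0 0 1 τ23 0 0 0 1 *
        blk4 0 η01 0 0 0 0 η12 0 0 0 0 η23 0 0 0 0) :
    τ03.map δ = τ02 * η23 ∧ τ13.map δ = τ12 * η23 ∧ τ23.map δ = η23 := by
  rw [blk4_map, blk4_unipotent_mul_superdiag] at hconn
  simp only [blk4, fromBlocks_inj] at hconn
  obtain ⟨-, ⟨-, h03, -, h13⟩, -, ⟨-, h23, -, -⟩⟩ := hconn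
  exact ⟨h03, h13, h23⟩

end Blocks

theorem stmt_11_general (R : Type*) [CommRing R] (δ : R → R)
    (hδadd : ∀ a b : R, δ (a + b) = δ a + δ b)
    (hδmul : ∀ a b : R, δ (a * b) = a * δ b + b * δ a)
    (h : ℕ)
    (τ01 τ02 : Matrix Unit (Fin h) R) (τ03 : Matrix Unit Unit R)
    (τ12 : Matrix (Fin h) (Fin h) R) (τ13 τ23 : Matrix (Fin h) Unit R)
    (η01 : Matrix Unit (Fin h) R) (η12 : Matrix (Fin h) (Fin h) R)
    (η23 : Matrix (Fin h) Unit R)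
    (𝒯 N : Matrix ((Unit ⊕ Fin h) ⊕ (Fin h ⊕ Unit)) ((Unit ⊕ Fin h) ⊕ (Fin h ⊕ Unit)) R)
    (h𝒯 : 𝒯 = blk4 1 τ01 τ02 τ03 0 1 τ12 τ13 0 0 1 τ23 0 0 0 1)
    (hN : N = blk4 0 η01 0 0 0 0 η12 0 0 0 0 η23 0 0 0 0)
    (hconn : 𝒯.map δ = 𝒯 * N)
    (hR3 : τ02 = τ23ᵀ * τ12 - τ13ᵀ)
    (Z : Matrix Unit Unit R) (hZ : Z = τ03 - τ23ᵀ * τ13) :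
    τ13.map δ = τ12 * (τ23.map δ) ∧
    Z.map δ = (-2 : R) • (τ13ᵀ * (τ23.map δ)) := by
  subst h𝒯 hN
  obtain ⟨h03, h13, h23⟩ := lastColumn_map_of_map_eq_mul_superdiag δ _ _ _ _ _ _ _ _ _ hconn
  let D : R →+ R := AddMonoidHom.mk' δ hδadd
  have hZ' : Z.map δ = τ03.map δ - ((τ23.map δ)ᵀ * τ13 + τ23ᵀ * τ13.map δ) := by
    rw [hZ, Matrix.map_sub δ (map_sub D), ← transpose_map]
    exact congrArg _ (map_mul_of_leibniz D hδmul τ23ᵀ τ13)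
  have hsymm : η23ᵀ * τ13 = τ13ᵀ * η23 := by
    rw [← transpose_eq_self_of_subsingleton (η23ᵀ * τ13), transpose_mul, transpose_transpose]
  refine ⟨by rw [h13, h23], ?_⟩
  rw [hZ', h03, h13, h23, hR3, Matrix.sub_mul, Matrix.mul_assoc, hsymm, neg_smul, two_smul]
  abel

/-- If `δ(𝒯) = 𝒯·N` with `N` having only superdiagonal blocks `η01, η12, η23`,
and the Riemann relations `τ01 = τ23ᵀ`, `τ12 = τ12ᵀ`,
`τ02 = τ23ᵀ·τ12 − τ13ᵀ` hold, then `δ(τ13) = τ12·δ(τ23)` and, with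
`Z = τ03 − τ23ᵀ·τ13`, `δ(Z) = −2·τ13ᵀ·δ(τ23)`. -/
theorem stmt_11 (R : Type*) [CommRing R] (δ : R → R)
    (hδadd : ∀ a b : R, δ (a + b) = δ a + δ b)
    (hδmul : ∀ a b : R, δ (a * b) = a * δ b + b * δ a)
    (h : ℕ) (hh : 1 ≤ h)
    (τ01 τ02 : Matrix Unit (Fin h) R) (τ03 : Matrix Unit Unit R)
    (τ12 : Matrix (Fin h) (Fin h) R) (τ13 τ23 : Matrix (Fin h) Unit R)
    (η01 : Matrix Unit (Fin h) R) (η12 : Matrix (Fin h) (Fin h) R)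
    (η23 : Matrix (Fin h) Unit R)
    (𝒯 N : Matrix ((Unit ⊕ Fin h) ⊕ (Fin h ⊕ Unit)) ((Unit ⊕ Fin h) ⊕ (Fin h ⊕ Unit)) R)
    (h𝒯 : 𝒯 = blk4 1 τ01 τ02 τ03 0 1 τ12 τ13 0 0 1 τ23 0 0 0 1)
    (hN : N = blk4 0 η01 0 0 0 0 η12 0 0 0 0 η23 0 0 0 0)
    (hconn : 𝒯.map δ = 𝒯 * N)
    (hR1 : τ01 = τ23ᵀ) (hR2 : τ12 = τ12ᵀ) (hR3 : τ02 = τ23ᵀ * τ12 - τ13ᵀ)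
    (Z : Matrix Unit Unit R) (hZ : Z = τ03 - τ23ᵀ * τ13) :
    τ13.map δ = τ12 * (τ23.map δ) ∧
    Z.map δ = (-2 : R) • (τ13ᵀ * (τ23.map δ)) :=
  stmt_11_general R δ hδadd hδmul h τ01 τ02 τ03 τ12 τ13 τ23 η01 η12 η23 𝒯 N h𝒯 hN hconn hR3 Z hZ
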